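/- Let σ′ ⊆ ℝ^g be a compact convex set with 0 ∈ σ′, and suppose σ′ = ⋃_{λ ∈ Λ} σ_λ for a finite family of compact convex sets σ_λ, each contained in σ′. If C(0,σ_λ) ∩ ℤ^g = Semi(0, σ_λ ∩ ℤ^g) for every λ with 0 ∈ σ_λ, then C(0,σ′) ∩ ℤ^g = Semi(0, σ′ ∩ ℤ^g). -/
import Mathlib


open Matrix Set

noncomputable section

/-- The standard lattice `ℤ^g` sitting inside `ℝ^g`. -/
def latticePts (g : ℕ) : Set (Fin g → ℝ) :=
  Set.range (fun a : Fin g → ℤ => fun i => (a i : ℝ))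

/-- `σ` is a (closed) Delaunay cell of the bilinear form `B`: there is an `α ∈ ℝ^g`
such that `σ` is the convex hull of the lattice points nearest to `α`
(with respect to the distance defined by `B`). -/
def IsDelaunayCell {g : ℕ} (B : (Fin g → ℝ) → (Fin g → ℝ) → ℝ)
    (σ : Set (Fin g → ℝ)) : Prop :=
  ∃ α : Fin g → ℝ, σ = convexHull ℝ
    {a | a ∈ latticePts g ∧ ∀ b ∈ latticePts g, B (a - α) (a - α) ≤ B (b - α) (b - α)}

/-- `C(0,S)`: the cone generated by `S` over the nonnegative reals. -/
def cone0 {g : ℕ} (S : Set (Fin g → ℝ)) : Set (Fin g → ℝ) :=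
  {x | ∃ r : ℝ, 0 ≤ r ∧ ∃ y ∈ convexHull ℝ S, x = r • y}

/-- `Semi(0, S ∩ ℤ^g)`: the additive submonoid generated by the lattice points of `S`. -/
def semi0 {g : ℕ} (S : Set (Fin g → ℝ)) : Set (Fin g → ℝ) :=
  (AddSubmonoid.closure (S ∩ latticePts g) : AddSubmonoid (Fin g → ℝ))

/-- If a compact convex set `σ'` containing `0` is a finite union of compact convex sets
`σ_λ ⊆ σ'`, and each `σ_λ` containing `0` satisfies
`C(0,σ_λ) ∩ ℤ^g = Semi(0, σ_λ ∩ ℤ^g)`, then `C(0,σ') ∩ ℤ^g = Semi(0, σ' ∩ ℤ^g)`. -/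
lemma lattice_add {g : ℕ} {a b : Fin g → ℝ} (ha : a ∈ latticePts g)
    (hb : b ∈ latticePts g) : a + b ∈ latticePts g := by
  obtain ⟨a', rfl⟩ := ha
  obtain ⟨b', rfl⟩ := hb
  exact ⟨a' + b', by funext i; simp [Pi.add_apply]⟩

lemma lattice_zero {g : ℕ} : (0 : Fin g → ℝ) ∈ latticePts g :=
  ⟨0, by funext i; simp⟩

theorem totally_generating_of_union
    (g : ℕ) (Λ : Type) [Fintype Λ]
    (σ' : Set (Fin g → ℝ)) (σ : Λ → Set (Fin g → ℝ))
    (hc : IsCompact σ') (hconv : Convex ℝ σ') (h0 : (0 : Fin g → ℝ) ∈ σ')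
    (hcl : ∀ l, IsCompact (σ l)) (hcvl : ∀ l, Convex ℝ (σ l))
    (hsub : ∀ l, σ l ⊆ σ')
    (hun : σ' = ⋃ l, σ l)
    (hgen : ∀ l, (0 : Fin g → ℝ) ∈ σ l →
      cone0 (σ l) ∩ latticePts g = semi0 (σ l)) :
    cone0 σ' ∩ latticePts g = semi0 σ' := by
  apply Set.Subset.antisymm
  · rintro x ⟨⟨r, hr, y, hy, rfl⟩, hlat⟩
    rw [hconv.convexHull_eq] at hy
    by_cases hxz : r • y = (0 : Fin g → ℝ)
    · rw [hxz]; exact (AddSubmonoid.closure _).zero_mem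
    set Bad : Set ℝ := ⋃ l ∈ {l | (0 : Fin g → ℝ) ∉ σ l}, {t : ℝ | t • y ∈ σ l}
      with hBad
    have hBadClosed : IsClosed Bad := by
      apply Set.Finite.isClosed_biUnion (Set.toFinite _)
      intro l _
      exact (hcl l).isClosed.preimage (continuous_id.smul continuous_const)
    have h0Bad : (0 : ℝ) ∈ Badᶜ := by
      simp only [hBad, Set.mem_compl_iff, Set.mem_iUnion, Set.mem_setOf_eq, not_exists]
      intro l hl
      rw [zero_smul]
      exact hl
    obtain ⟨ε, hε, hball⟩ := Metric.isOpen_iff.mp hBadClosed.isOpen_compl 0 h0Bad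
    set t : ℝ := min (ε / 2) 1 with htdef
    have ht0 : 0 < t := lt_min (by linarith) one_pos
    have ht1 : t ≤ 1 := min_le_right _ _
    have hty : t • y ∈ σ' := by
      have := hconv hy h0 ht0.le (by linarith : (0:ℝ) ≤ 1 - t) (by ring)
      simpa using this
    rw [hun] at hty
    obtain ⟨l, htl⟩ := Set.mem_iUnion.mp hty
    have htball : t ∈ Metric.ball (0 : ℝ) ε := by
      simp only [Metric.mem_ball, Real.dist_eq, sub_zero, abs_of_pos ht0]
      calc t ≤ ε / 2 := min_le_left _ _
        _ < ε := by linarith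
    have h0l : (0 : Fin g → ℝ) ∈ σ l := by
      by_contra h0l
      exact (hball htball) (Set.mem_biUnion (show l ∈ {l | (0 : Fin g → ℝ) ∉ σ l} from h0l) htl)
    have hx : r • y ∈ cone0 (σ l) ∩ latticePts g := by
      refine ⟨⟨r / t, div_nonneg hr ht0.le, t • y, subset_convexHull ℝ _ htl, ?_⟩, hlat⟩
      rw [smul_smul, div_mul_cancel₀ r ht0.ne']
    rw [hgen l h0l] at hx
    exact AddSubmonoid.closure_mono (Set.inter_subset_inter_left _ (hsub l)) hx
  · intro x hx
    have key : AddSubmonoid.closure (σ' ∩ latticePts g) ≤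
        { carrier := cone0 σ' ∩ latticePts g
          zero_mem' := ⟨⟨0, le_refl 0, 0, subset_convexHull ℝ _ h0, (zero_smul ℝ _).symm⟩,
            lattice_zero⟩
          add_mem' := by
            rintro a b ⟨⟨r, hr, y, hy, rfl⟩, hal⟩ ⟨⟨s, hs, z, hz, rfl⟩, hbl⟩
            refine ⟨?_, lattice_add hal hbl⟩
            rw [hconv.convexHull_eq] at hy hz
            by_cases hrs : r + s = 0
            · have hr0 : r = 0 := by linarith [hr, hs, hrs]
              have hs0 : s = 0 := by linarith
              exact ⟨0, le_refl 0, 0, subset_convexHull ℝ _ h0, by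
                rw [hr0, hs0]; simp⟩
            · have hrs' : 0 < r + s := lt_of_le_of_ne (by linarith) (Ne.symm hrs)
              refine ⟨r + s, hrs'.le, (r / (r + s)) • y + (s / (r + s)) • z,
                subset_convexHull ℝ _ (hconv hy hz (div_nonneg hr hrs'.le)
                  (div_nonneg hs hrs'.le) (by field_simp)), ?_⟩
              rw [smul_add, smul_smul, smul_smul, mul_div_cancel₀ _ hrs,
                mul_div_cancel₀ _ hrs] } := by
      apply AddSubmonoid.closure_le.mpr
      intro a ⟨ha, hal⟩
      exact ⟨⟨1, zero_le_one, a, subset_convexHull ℝ _ ha, (one_smul ℝ a).symm⟩, hal⟩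
    exact key hx
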